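/- Let α₀ ∈ ℂ, U ⊆ ℂ open connected, and let (q₁, p₁, q₂, p₂) be differentiable functions on U solving the t-flow of the autonomous system (A1): q₁' = q₁² + p₂, p₁' = −2 q₁ p₁ − 3α₀, q₂' = −(1/2) p₂² + p₁, p₂' = q₂. Then both K₁(q₁(t), p₁(t), q₂(t), p₂(t)) and K₂(q₁(t), p₁(t), q₂(t), p₂(t)) are constant on U, where K₁ = q₁² p₁ + 3α₀ q₁ − q₂²/2 − p₂³/6 + p₁ p₂ and K₂ = p₁³/9 − (3α₀/2) q₂ p₂² + 3α₀² p₂ + α₀ p₁ q₂ + 3α₀ q₁ q₂² − (1/3) p₁² p₂² + (2/3) q₁ p₁² q₂ + (1/4) p₁ p₂⁴ + q₁² p₁ q₂² − q₁ p₁ q₂ p₂². That is, K₁ and K₂ are first integrals of the t-flow of (A1). -/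

import Mathlib

/-- `(q₁,p₁,q₂,p₂)` solves the `t`-flow of the autonomous system (A1) with
parameter `α₀` on `U`: `q₁' = q₁² + p₂`, `p₁' = -2q₁p₁ - 3α₀`,
`q₂' = -(1/2)p₂² + p₁`, `p₂' = q₂`. -/
def SolvesA1 (a0 : ℂ) (U : Set ℂ) (q1 p1 q2 p2 : ℂ → ℂ) : Prop :=
  ∀ t ∈ U,
    HasDerivAt q1 (q1 t ^ 2 + p2 t) t ∧
    HasDerivAt p1 (-2 * q1 t * p1 t - 3 * a0) t ∧
    HasDerivAt q2 (-(1/2) * p2 t ^ 2 + p1 t) t ∧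
    HasDerivAt p2 (q2 t) t

/-- The Hamiltonian `K₁` of the autonomous system (A1). -/
noncomputable def K1 (a0 q1 p1 q2 p2 : ℂ) : ℂ :=
  q1 ^ 2 * p1 + 3 * a0 * q1 - q2 ^ 2 / 2 - p2 ^ 3 / 6 + p1 * p2

/-- The Hamiltonian `K₂` of the autonomous system (A1). -/
noncomputable def K2 (a0 q1 p1 q2 p2 : ℂ) : ℂ :=
  p1 ^ 3 / 9 - (3 * a0 / 2) * q2 * p2 ^ 2 + 3 * a0 ^ 2 * p2 + a0 * p1 * q2
    + 3 * a0 * q1 * q2 ^ 2 - (1/3) * p1 ^ 2 * p2 ^ 2 + (2/3) * q1 * p1 ^ 2 * q2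
    + (1/4) * p1 * p2 ^ 4 + q1 ^ 2 * p1 * q2 ^ 2 - q1 * p1 * q2 * p2 ^ 2

/-!
The system (A1) is the Hamiltonian flow of `K₁`, so the derivative of a function `K` along a
solution is the Poisson bracket `{K, K₁}`. Computing the partial derivatives of `K₁` and `K₂`
by the chain rule, the brackets `{K₁, K₁}` and `{K₂, K₁}` vanish identically as polynomials,
and a function with zero derivative on an open connected set is constant.
-/

theorem IsOpen.eq_of_hasDerivAt_zero {f : ℂ → ℂ} {U : Set ℂ} (hU : IsOpen U)
    (hconn : IsPreconnected U) (hf : ∀ t ∈ U, HasDerivAt f 0 t) {s t : ℂ}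
    (hs : s ∈ U) (ht : t ∈ U) : f s = f t :=
  hU.is_const_of_deriv_eq_zero hconn
    (fun x hx => (hf x hx).differentiableAt.differentiableWithinAt)
    (fun x hx => (hf x hx).deriv) hs ht

section ChainRule

variable (a0 : ℂ) {q1 p1 q2 p2 : ℂ → ℂ} {q1' p1' q2' p2' t : ℂ}

theorem hasDerivAt_K1_comp (hq1 : HasDerivAt q1 q1' t) (hp1 : HasDerivAt p1 p1' t)
    (hq2 : HasDerivAt q2 q2' t) (hp2 : HasDerivAt p2 p2' t) :
    HasDerivAt (fun x => K1 a0 (q1 x) (p1 x) (q2 x) (p2 x))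
      ((2 * q1 t * p1 t + 3 * a0) * q1' + (q1 t ^ 2 + p2 t) * p1' - q2 t * q2'
        + (p1 t - p2 t ^ 2 / 2) * p2') t := by
  have H := (((((hq1.pow 2).mul hp1).add (hq1.const_mul (3 * a0))).sub
    ((hq2.pow 2).div_const 2)).sub ((hp2.pow 3).div_const 6)).add (hp1.mul hp2)
  refine (H : HasDerivAt (fun x => _) _ t).congr_deriv ?_
  simp only [Pi.pow_apply, Nat.cast_ofNat]
  ring

theorem hasDerivAt_K2_comp (hq1 : HasDerivAt q1 q1' t) (hp1 : HasDerivAt p1 p1' t)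
    (hq2 : HasDerivAt q2 q2' t) (hp2 : HasDerivAt p2 p2' t) :
    HasDerivAt (fun x => K2 a0 (q1 x) (p1 x) (q2 x) (p2 x))
      ((3 * a0 * q2 t ^ 2 + 2 / 3 * p1 t ^ 2 * q2 t + 2 * q1 t * p1 t * q2 t ^ 2
          - p1 t * q2 t * p2 t ^ 2) * q1'
        + (p1 t ^ 2 / 3 + a0 * q2 t - 2 / 3 * p1 t * p2 t ^ 2 + 4 / 3 * q1 t * p1 t * q2 t
          + p2 t ^ 4 / 4 + q1 t ^ 2 * q2 t ^ 2 - q1 t * q2 t * p2 t ^ 2) * p1'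
        + (-(3 * a0 / 2) * p2 t ^ 2 + a0 * p1 t + 6 * a0 * q1 t * q2 t + 2 / 3 * q1 t * p1 t ^ 2
          + 2 * q1 t ^ 2 * p1 t * q2 t - q1 t * p1 t * p2 t ^ 2) * q2'
        + (-3 * a0 * q2 t * p2 t + 3 * a0 ^ 2 - 2 / 3 * p1 t ^ 2 * p2 t + p1 t * p2 t ^ 3
          - 2 * q1 t * p1 t * q2 t * p2 t) * p2') t := by
  have H := ((((((((((hp1.pow 3).div_const 9).sub
    ((hq2.const_mul (3 * a0 / 2)).mul (hp2.pow 2))).add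
    (hp2.const_mul (3 * a0 ^ 2))).add
    ((hp1.const_mul a0).mul hq2)).add
    ((hq1.const_mul (3 * a0)).mul (hq2.pow 2))).sub
    (((hp1.pow 2).const_mul (1 / 3)).mul (hp2.pow 2))).add
    (((hq1.const_mul (2 / 3)).mul (hp1.pow 2)).mul hq2)).add
    ((hp1.const_mul (1 / 4)).mul (hp2.pow 4))).add
    (((hq1.pow 2).mul hp1).mul (hq2.pow 2))).sub
    (((hq1.mul hp1).mul hq2).mul (hp2.pow 2))
  refine (H : HasDerivAt (fun x => _) _ t).congr_deriv ?_
  simp only [Pi.pow_apply, Pi.mul_apply, Nat.cast_ofNat]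
  ring

end ChainRule

namespace SolvesA1

variable {a0 : ℂ} {U : Set ℂ} {q1 p1 q2 p2 : ℂ → ℂ} {t : ℂ}

theorem hasDerivAt_K1 (h : SolvesA1 a0 U q1 p1 q2 p2) (ht : t ∈ U) :
    HasDerivAt (fun x => K1 a0 (q1 x) (p1 x) (q2 x) (p2 x)) 0 t := by
  obtain ⟨hq1, hp1, hq2, hp2⟩ := h t ht
  convert hasDerivAt_K1_comp a0 hq1 hp1 hq2 hp2 using 1
  ring

theorem hasDerivAt_K2 (h : SolvesA1 a0 U q1 p1 q2 p2) (ht : t ∈ U) :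
    HasDerivAt (fun x => K2 a0 (q1 x) (p1 x) (q2 x) (p2 x)) 0 t := by
  obtain ⟨hq1, hp1, hq2, hp2⟩ := h t ht
  convert hasDerivAt_K2_comp a0 hq1 hp1 hq2 hp2 using 1
  ring

end SolvesA1

theorem stmt14 (a0 : ℂ) (U : Set ℂ) (hU : IsOpen U) (hUconn : IsConnected U)
    (q1 p1 q2 p2 : ℂ → ℂ) (h : SolvesA1 a0 U q1 p1 q2 p2) :
    ∀ s ∈ U, ∀ t ∈ U,
      K1 a0 (q1 s) (p1 s) (q2 s) (p2 s) = K1 a0 (q1 t) (p1 t) (q2 t) (p2 t) ∧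
      K2 a0 (q1 s) (p1 s) (q2 s) (p2 s) = K2 a0 (q1 t) (p1 t) (q2 t) (p2 t) :=
  fun _ hs _ ht =>
    ⟨hU.eq_of_hasDerivAt_zero hUconn.isPreconnected (fun _ hx => h.hasDerivAt_K1 hx) hs ht,
      hU.eq_of_hasDerivAt_zero hUconn.isPreconnected (fun _ hx => h.hasDerivAt_K2 hx) hs ht⟩
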